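/- Let N = 1 + p + q + r and write points of ℂ^N as (z, u, v, w) ∈ ℂ × ℂ^p × ℂ^q × ℂ^r, so that ℍ^N = {(z,u,v,w) : Im z > |u|² + |v|² + |w|²}. Let λ > 1 be real, let a ∈ ℂ^r, b ∈ ℂ, let D be a q×q diagonal matrix whose diagonal entries have modulus 1 and are different from 1, and let A ∈ ℂ^{r×r} be non-singular with ‖A‖ ≤ 1, and suppose ψ(z,u,v,w) = (λz + 2i⟨w, a⟩ + b, √λ·u, √λ·Dv, √λ·Aw) is a self-map of ℍ^N. Suppose there exists M ∈ ℂ^{r×r} with exp(M) = A, and for t ≥ 0 set λ_t = λ^t, A_t = exp(tM), a_t = (λI − √λ·Aᴴ)^{−1}(λ_t I − √(λ_t)·A_tᴴ) a, b_t = ((1 − λ_t)/(1 − λ))·b, and Q_t = I − A_tᴴ A_t. If for every t ≥ 0: (1) Q_t is Hermitian positive semi-definite, and (2) there exists x_t ∈ ℂ^r with Q_t x_t = a_t and Im(b_t) ≥ (1/λ_t)·x_tᴴ a_t, then ψ can be embedded into a semigroup of holomorphic self-maps of ℍ^N. -/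

import Mathlib

open Matrix Set Complex Filter
open scoped ComplexOrder

noncomputable section

/-- The Hermitian inner product `⟨x, y⟩ = ∑ j, x j * conj (y j)` on `ℂ^n`. -/
def herm {n : Type*} [Fintype n] (x y : n → ℂ) : ℂ :=
  ∑ j, x j * (starRingEnd ℂ) (y j)

/-- The squared Euclidean norm on `ℂ^n`. -/
def enormSq {n : Type*} [Fintype n] (x : n → ℂ) : ℝ :=
  ∑ j, ‖x j‖ ^ 2

/-- The operator (spectral) norm of `A` is at most `1`. -/
def OpNormLeOne {n : Type*} [Fintype n] (A : Matrix n n ℂ) : Prop :=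
  ∀ x : n → ℂ, enormSq (A.mulVec x) ≤ enormSq x

/-- `(φ t)_{t ≥ 0}` is a (continuous) semigroup of holomorphic self-maps of `U`. -/
def IsHolSemigroupOn {E : Type*} [NormedAddCommGroup E] [NormedSpace ℂ E]
    (U : Set E) (φ : ℝ → E → E) : Prop :=
  (∀ t : ℝ, 0 ≤ t → MapsTo (φ t) U U) ∧
  (∀ t : ℝ, 0 ≤ t → DifferentiableOn ℂ (φ t) U) ∧
  (∀ z ∈ U, φ 0 z = z) ∧
  (∀ s : ℝ, 0 ≤ s → ∀ t : ℝ, 0 ≤ t → ∀ z ∈ U, φ (s + t) z = φ s (φ t z)) ∧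
  (∀ K : Set E, K ⊆ U → IsCompact K →
    TendstoUniformlyOn (fun t => φ t) id (nhdsWithin 0 (Ioi 0)) K)

/-- `ℂ^N = ℂ × ℂ^p × ℂ^q × ℂ^r`. -/
abbrev E4 (p q r : ℕ) : Type := ℂ × (Fin p → ℂ) × (Fin q → ℂ) × (Fin r → ℂ)

/-- The Siegel half-plane `ℍ^N = {(z,u,v,w) : Im z > |u|² + |v|² + |w|²}`. -/
def Siegel4 (p q r : ℕ) : Set (E4 p q r) :=
  {x | enormSq x.2.1 + enormSq x.2.2.1 + enormSq x.2.2.2 < x.1.im}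

/-- `A_t = exp (t M)`. -/
def At {r : ℕ} (M : Matrix (Fin r) (Fin r) ℂ) (t : ℝ) : Matrix (Fin r) (Fin r) ℂ :=
  NormedSpace.exp ((t : ℂ) • M)

/-- `Q_t = I - A_tᴴ A_t`. -/
def Qt {r : ℕ} (M : Matrix (Fin r) (Fin r) ℂ) (t : ℝ) : Matrix (Fin r) (Fin r) ℂ :=
  (1 : Matrix (Fin r) (Fin r) ℂ) - (At M t)ᴴ * At M t

/-- `a_t = (λ I - √λ Aᴴ)⁻¹ (λ^t I - √(λ^t) A_tᴴ) a`. -/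
def at' {r : ℕ} (lam : ℝ) (A : Matrix (Fin r) (Fin r) ℂ)
    (M : Matrix (Fin r) (Fin r) ℂ) (a : Fin r → ℂ) (t : ℝ) : Fin r → ℂ :=
  ((((lam : ℂ) • (1 : Matrix (Fin r) (Fin r) ℂ) - (Real.sqrt lam : ℂ) • Aᴴ)⁻¹) *
    (((lam ^ t : ℝ) : ℂ) • (1 : Matrix (Fin r) (Fin r) ℂ)
      - ((Real.sqrt (lam ^ t) : ℝ) : ℂ) • (At M t)ᴴ)).mulVec a

/-- `b_t = ((1 - λ^t)/(1 - λ)) b`. -/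
def bt (lam : ℝ) (b : ℂ) (t : ℝ) : ℂ :=
  ((1 - ((lam ^ t : ℝ) : ℂ)) / (1 - (lam : ℂ))) * b


/-!
`ψ` is the time-one map of the explicit flow
`φ_t(z, u, v, w) = (λ^t z + 2i⟨w, a_t⟩ + b_t, λ^{t/2} u, λ^{t/2} D^t v, λ^{t/2} A_t w)`,
with `D^t = diag(e_j^t)` for the principal branch. Since `A_s`, `A_t` and `A = A_1` commute,
`a_{s+t} = λ^s a_t + λ^{t/2} A_tᴴ a_s` and `b_{s+t} = λ^s b_t + b_s`, which is the semigroup law.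
The flow preserves `ℍ^N`: if `Q_t x_t = a_t`, positivity of `Q_t` at `w + λ^{-t} x_t` gives
`λ^t (|w|² - |A_t w|²) + 2 Re⟨w, a_t⟩ + λ^{-t} x_tᴴ a_t ≥ 0`, whose last term is at most
`Im b_t`; the `u`- and `v`-parts only pick up the factor `λ^t` since `|e_j^t| = 1`.
Joint continuity in `(t, x)` gives uniform convergence on compacta as `t → 0`.
-/

section

variable {n : Type*} [Fintype n]

theorem herm_eq_dotProduct (x y : n → ℂ) : herm x y = x ⬝ᵥ star y := rfl

theorem herm_comm (x y : n → ℂ) : herm x y = starRingEnd ℂ (herm y x) := by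
  simp [herm, map_sum, mul_comm]

theorem herm_add_left (x y z : n → ℂ) : herm (x + y) z = herm x z + herm y z := by
  simp [herm_eq_dotProduct, add_dotProduct]

theorem herm_add_right (x y z : n → ℂ) : herm x (y + z) = herm x y + herm x z := by
  simp [herm_eq_dotProduct, dotProduct_add]

theorem herm_smul_left (c : ℂ) (x y : n → ℂ) : herm (c • x) y = c * herm x y := by
  simp [herm_eq_dotProduct]

theorem herm_ofReal_smul_right (c : ℝ) (x y : n → ℂ) : herm x ((c : ℂ) • y) = c * herm x y := by
  simp [herm_eq_dotProduct]

theorem herm_zero_right (x : n → ℂ) : herm x 0 = 0 := by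
  simp [herm_eq_dotProduct]

theorem herm_conjTranspose_mulVec_right (B : Matrix n n ℂ) (x y : n → ℂ) :
    herm x (Bᴴ *ᵥ y) = herm (B *ᵥ x) y := by
  rw [herm_eq_dotProduct, herm_eq_dotProduct, star_mulVec, conjTranspose_conjTranspose,
    dotProduct_comm, ← dotProduct_mulVec, dotProduct_comm]

theorem herm_self (x : n → ℂ) : herm x x = enormSq x := by
  simp [herm, enormSq, Complex.mul_conj, Complex.normSq_eq_norm_sq]

theorem enormSq_smul (c : ℂ) (x : n → ℂ) : enormSq (c • x) = ‖c‖ ^ 2 * enormSq x := by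
  simp [enormSq, mul_pow, Finset.mul_sum]

theorem enormSq_pos {x : n → ℂ} (hx : x ≠ 0) : 0 < enormSq x := by
  obtain ⟨j, hj⟩ := Function.ne_iff.mp hx
  exact Finset.sum_pos' (fun i _ => by positivity)
    ⟨j, Finset.mem_univ j, pow_pos (norm_pos_iff.mpr hj) 2⟩

theorem enormSq_diagonal_mulVec [DecidableEq n] {d : n → ℂ} (hd : ∀ j, ‖d j‖ = 1) (v : n → ℂ) :
    enormSq (diagonal d *ᵥ v) = enormSq v := by
  simp [enormSq, mulVec_diagonal, hd]

theorem Matrix.PosSemidef.quadratic_nonneg {Q : Matrix n n ℂ} (hQ : Q.PosSemidef)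
    {x y : n → ℂ} (hx : Q *ᵥ x = y) (c : ℝ) (w : n → ℂ) :
    0 ≤ (herm (Q *ᵥ w) w).re + 2 * c * (herm w y).re + c ^ 2 * (herm y x).re := by
  have hnonneg : 0 ≤ (herm (Q *ᵥ (w + (c : ℂ) • x)) (w + (c : ℂ) • x)).re :=
    (Complex.le_def.mp (hQ.dotProduct_mulVec_nonneg _)).1.trans_eq (by
      rw [herm_eq_dotProduct, dotProduct_comm])
  have hcross : herm (Q *ᵥ w) x = herm w y := by
    rw [← herm_conjTranspose_mulVec_right, hQ.1.eq, hx]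
  rw [mulVec_add, mulVec_smul, hx, herm_add_left, herm_add_right, herm_add_right,
    herm_ofReal_smul_right, herm_ofReal_smul_right, herm_smul_left, herm_smul_left, hcross,
    herm_comm y w] at hnonneg
  simp only [Complex.add_re, Complex.re_ofReal_mul, Complex.conj_re] at hnonneg
  linarith

theorem re_herm_one_sub_conjTranspose_mul_mulVec [DecidableEq n] (B : Matrix n n ℂ)
    (w : n → ℂ) : (herm ((1 - Bᴴ * B) *ᵥ w) w).re = enormSq w - enormSq (B *ᵥ w) := by
  rw [sub_mulVec, one_mulVec, ← mulVec_mulVec, herm_eq_dotProduct, sub_dotProduct,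
    ← herm_eq_dotProduct, ← herm_eq_dotProduct, ← herm_conjTranspose_mulVec_right Bᴴ,
    conjTranspose_conjTranspose, herm_self, herm_self]
  simp

theorem isUnit_smul_one_sub_smul [DecidableEq n] {A : Matrix n n ℂ} (hA : OpNormLeOne A)
    {c d : ℂ} (hdc : ‖d‖ < ‖c‖) : IsUnit (c • (1 : Matrix n n ℂ) - d • A) := by
  rw [isUnit_iff_isUnit_det, isUnit_iff_ne_zero]
  intro hdet
  obtain ⟨v, hv0, hv⟩ := exists_mulVec_eq_zero_iff.mpr hdet
  rw [sub_mulVec, smul_mulVec, smul_mulVec, one_mulVec, sub_eq_zero] at hv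
  have hnorm : ‖c‖ ^ 2 * enormSq v = ‖d‖ ^ 2 * enormSq (A *ᵥ v) := by
    rw [← enormSq_smul, ← enormSq_smul, hv]
  have hsq : ‖d‖ ^ 2 < ‖c‖ ^ 2 := pow_lt_pow_left₀ hdc (norm_nonneg d) two_ne_zero
  have h1 := mul_le_mul_of_nonneg_left (hA v) (sq_nonneg ‖d‖)
  have h2 := mul_lt_mul_of_pos_right hsq (enormSq_pos hv0)
  linarith

theorem Matrix.commute_nonsing_inv_left [DecidableEq n] {α : Type*} [CommRing α]
    {S B : Matrix n n α} (hS : IsUnit S) (h : Commute S B) : Commute S⁻¹ B := by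
  obtain ⟨u, rfl⟩ := hS
  rw [← coe_units_inv]
  exact h.units_inv_left

end

section coefficients

variable {r : ℕ}

theorem At_zero (M : Matrix (Fin r) (Fin r) ℂ) : At M 0 = 1 := by simp [At]

theorem At_one (M : Matrix (Fin r) (Fin r) ℂ) : At M 1 = NormedSpace.exp M := by simp [At]

theorem At_add (M : Matrix (Fin r) (Fin r) ℂ) (s t : ℝ) : At M (s + t) = At M s * At M t := by
  rw [At, At, At, ← Matrix.exp_add_of_commute, Complex.ofReal_add, add_smul]
  exact ((Commute.refl M).smul_left _).smul_right _

theorem commute_At (M : Matrix (Fin r) (Fin r) ℂ) (s t : ℝ) : Commute (At M s) (At M t) := by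
  rw [Commute, SemiconjBy, ← At_add, ← At_add, add_comm]

theorem continuous_At (M : Matrix (Fin r) (Fin r) ℂ) : Continuous (At M) := by
  -- any matrix norm will do; the `linfty` one keeps the topology definitionally the product one
  let _ : NormedRing (Matrix (Fin r) (Fin r) ℂ) := Matrix.linftyOpNormedRing
  let _ : NormedAlgebra ℚ (Matrix (Fin r) (Fin r) ℂ) := Matrix.linftyOpNormedAlgebra
  let _ : NormedAlgebra ℂ (Matrix (Fin r) (Fin r) ℂ) := Matrix.linftyOpNormedAlgebra
  exact NormedSpace.exp_continuous.comp (Complex.continuous_ofReal.smul continuous_const)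

/-- With `A = exp M`, the vector `a_t` of the statement is `R_1⁻¹ R_t a`. -/
def Rt (lam : ℝ) (M : Matrix (Fin r) (Fin r) ℂ) (t : ℝ) : Matrix (Fin r) (Fin r) ℂ :=
  ((lam ^ t : ℝ) : ℂ) • (1 : Matrix (Fin r) (Fin r) ℂ) - ((Real.sqrt (lam ^ t) : ℝ) : ℂ) • (At M t)ᴴ

variable {lam : ℝ} {A M : Matrix (Fin r) (Fin r) ℂ}

theorem at'_eq (a : Fin r → ℂ) (t : ℝ) :
    at' lam A M a t = (((lam : ℂ) • 1 - (Real.sqrt lam : ℂ) • Aᴴ)⁻¹ * Rt lam M t) *ᵥ a :=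
  rfl

theorem Rt_one : Rt lam M 1 = (lam : ℂ) • 1 - (Real.sqrt lam : ℂ) • (NormedSpace.exp M)ᴴ := by
  rw [Rt, Real.rpow_one, At_one]

theorem Rt_add (hlam : 0 < lam) (s t : ℝ) :
    Rt lam M (s + t) = ((lam ^ s : ℝ) : ℂ) • Rt lam M t
      + ((Real.sqrt (lam ^ t) : ℝ) : ℂ) • ((At M t)ᴴ * Rt lam M s) := by
  rw [Rt, Rt, Rt, At_add, conjTranspose_mul, Real.rpow_add hlam,
    Real.sqrt_mul (Real.rpow_nonneg hlam.le s), Matrix.mul_sub, Matrix.mul_smul,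
    Matrix.mul_smul, Matrix.mul_one]
  push_cast
  module

theorem commute_Rt_conjTranspose_At (s t : ℝ) : Commute (Rt lam M s) (At M t)ᴴ :=
  ((Commute.one_left _).smul_left _).sub_left (((commute_At M s t).star_star).smul_left _)

theorem isUnit_Rt_one (hlam : 1 < lam) (hA : OpNormLeOne (NormedSpace.exp M)) :
    IsUnit (Rt lam M 1) := by
  have hconj : Rt lam M 1 = ((lam : ℂ) • 1 - (Real.sqrt lam : ℂ) • NormedSpace.exp M)ᴴ := by
    simp [Rt_one, conjTranspose_sub, conjTranspose_smul]
  rw [hconj, isUnit_conjTranspose]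
  refine isUnit_smul_one_sub_smul hA ?_
  rw [Complex.norm_real, Complex.norm_real, Real.norm_of_nonneg (Real.sqrt_nonneg _),
    Real.norm_of_nonneg (by linarith)]
  exact Real.sqrt_lt_self_iff.mpr hlam

theorem continuous_Rt (hlam : 0 < lam) : Continuous (Rt lam M) := by
  have := continuous_At M
  unfold Rt
  fun_prop (disch := exact hlam.ne')

variable (a : Fin r → ℂ)

theorem at'_zero : at' lam A M a 0 = 0 := by
  simp [at', At_zero]

theorem at'_one (hM : NormedSpace.exp M = A) (hS : IsUnit (Rt lam M 1)) :
    at' lam A M a 1 = a := by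
  rw [at'_eq, ← hM, ← Rt_one, nonsing_inv_mul _ ((isUnit_iff_isUnit_det _).mp hS), one_mulVec]

theorem at'_add (hlam : 0 < lam) (hM : NormedSpace.exp M = A) (hS : IsUnit (Rt lam M 1))
    (s t : ℝ) :
    at' lam A M a (s + t) = ((lam ^ s : ℝ) : ℂ) • at' lam A M a t
      + ((Real.sqrt (lam ^ t) : ℝ) : ℂ) • (At M t)ᴴ *ᵥ at' lam A M a s := by
  have hcomm : Commute (Rt lam M 1)⁻¹ (At M t)ᴴ :=
    commute_nonsing_inv_left hS (commute_Rt_conjTranspose_At 1 t)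
  simp only [at'_eq, ← hM, ← Rt_one, Rt_add hlam, Matrix.mul_add, Matrix.mul_smul,
    ← Matrix.mul_assoc, hcomm.eq, add_mulVec, smul_mulVec, mulVec_mulVec]

theorem continuous_at' (hlam : 0 < lam) : Continuous (at' lam A M a) :=
  (continuous_const.matrix_mul (continuous_Rt hlam)).matrix_mulVec continuous_const

variable (b : ℂ)

theorem bt_zero : bt lam b 0 = 0 := by simp [bt]

theorem bt_one (hlam : lam ≠ 1) : bt lam b 1 = b := by
  have : (1 : ℂ) - lam ≠ 0 := sub_ne_zero.mpr (by exact_mod_cast hlam.symm)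
  rw [bt, Real.rpow_one, div_self this, one_mul]

theorem bt_add (hlam : 0 < lam) (s t : ℝ) :
    bt lam b (s + t) = ((lam ^ s : ℝ) : ℂ) * bt lam b t + bt lam b s := by
  simp only [bt, Real.rpow_add hlam]
  push_cast
  ring

theorem continuous_bt (hlam : 0 < lam) : Continuous (bt lam b) := by
  unfold bt
  fun_prop (disch := exact hlam.ne')

end coefficients

theorem IsHolSemigroupOn.of_continuous {E : Type*} [NormedAddCommGroup E] [NormedSpace ℂ E]
    {U : Set E} {φ : ℝ → E → E} (hmaps : ∀ t, 0 ≤ t → MapsTo (φ t) U U)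
    (hdiff : ∀ t, 0 ≤ t → DifferentiableOn ℂ (φ t) U) (hzero : ∀ z ∈ U, φ 0 z = z)
    (hadd : ∀ s, 0 ≤ s → ∀ t, 0 ≤ t → ∀ z ∈ U, φ (s + t) z = φ s (φ t z))
    (hcont : Continuous (Function.uncurry φ)) : IsHolSemigroupOn U φ := by
  refine ⟨hmaps, hdiff, hzero, hadd, fun K hKU hK => ?_⟩
  have hcurry := (ContinuousMap.curry ⟨_, hcont⟩).continuous.tendsto 0
  have h := ContinuousMap.tendsto_iff_forall_isCompact_tendstoUniformlyOn.mp hcurry K hK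
  have hid : TendstoUniformlyOn φ id (nhds 0) K := h.congr_right fun z hz => hzero z (hKU hz)
  exact fun u hu => (hid u hu).filter_mono nhdsWithin_le_nhds

@[fun_prop]
theorem Differentiable.const_matrix_mulVec {E : Type*} [NormedAddCommGroup E] [NormedSpace ℂ E]
    {m n : Type*} [Fintype m] [Fintype n] (B : Matrix m n ℂ) {f : E → n → ℂ}
    (hf : Differentiable ℂ f) : Differentiable ℂ fun x => B *ᵥ f x :=
  differentiable_pi.2 fun i => Differentiable.fun_sum fun j _ =>
    (differentiable_pi.1 hf j).const_mul (B i j)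

section siegelFlow

variable {p q r : ℕ}

def siegelFlow (lam : ℝ) (a : Fin r → ℂ) (b : ℂ) (e : Fin q → ℂ)
    (A M : Matrix (Fin r) (Fin r) ℂ) (t : ℝ) (x : E4 p q r) : E4 p q r :=
  (((lam ^ t : ℝ) : ℂ) * x.1 + 2 * Complex.I * herm x.2.2.2 (at' lam A M a t) + bt lam b t,
    ((Real.sqrt (lam ^ t) : ℝ) : ℂ) • x.2.1,
    ((Real.sqrt (lam ^ t) : ℝ) : ℂ) • diagonal (fun j => e j ^ (t : ℂ)) *ᵥ x.2.2.1,
    ((Real.sqrt (lam ^ t) : ℝ) : ℂ) • At M t *ᵥ x.2.2.2)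

variable {lam : ℝ} {a : Fin r → ℂ} {b : ℂ} {e : Fin q → ℂ} {A M : Matrix (Fin r) (Fin r) ℂ}

theorem siegelFlow_zero (x : E4 p q r) : siegelFlow lam a b e A M 0 x = x := by
  simp [siegelFlow, at'_zero, bt_zero, At_zero, herm_zero_right]

theorem siegelFlow_one (hlam : lam ≠ 1) (hM : NormedSpace.exp M = A) (hS : IsUnit (Rt lam M 1))
    (x : E4 p q r) :
    siegelFlow lam a b e A M 1 x = ((lam : ℂ) * x.1 + 2 * Complex.I * herm x.2.2.2 a + b,
      (Real.sqrt lam : ℂ) • x.2.1,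
      (Real.sqrt lam : ℂ) • (Matrix.diagonal e).mulVec x.2.2.1,
      (Real.sqrt lam : ℂ) • A.mulVec x.2.2.2) := by
  simp [siegelFlow, at'_one a hM hS, bt_one b hlam, At_one, hM]

theorem siegelFlow_add (hlam : 0 < lam) (hM : NormedSpace.exp M = A) (hS : IsUnit (Rt lam M 1))
    (he : ∀ j, e j ≠ 0) (s t : ℝ) (x : E4 p q r) :
    siegelFlow lam a b e A M (s + t) x
      = siegelFlow lam a b e A M s (siegelFlow lam a b e A M t x) := by
  have hsqrt : Real.sqrt (lam ^ (s + t)) = Real.sqrt (lam ^ s) * Real.sqrt (lam ^ t) := by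
    rw [Real.rpow_add hlam, Real.sqrt_mul (Real.rpow_nonneg hlam.le s)]
  have hdiag : diagonal (fun j => e j ^ ((s + t : ℝ) : ℂ))
      = diagonal (fun j => e j ^ (s : ℂ)) * diagonal (fun j => e j ^ (t : ℂ)) := by
    simp [diagonal_mul_diagonal, Complex.cpow_add _ _ (he _)]
  simp only [siegelFlow, Prod.mk.injEq]
  refine ⟨?_, ?_, ?_, ?_⟩
  · rw [at'_add a hlam hM hS, herm_add_right, herm_ofReal_smul_right, herm_ofReal_smul_right,
      herm_smul_left, herm_conjTranspose_mulVec_right, bt_add b hlam, Real.rpow_add hlam]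
    push_cast
    ring
  · rw [hsqrt, Complex.ofReal_mul, mul_smul]
  · rw [hdiag, ← mulVec_mulVec, hsqrt, Complex.ofReal_mul, mul_smul, mulVec_smul]
  · rw [At_add, ← mulVec_mulVec, hsqrt, Complex.ofReal_mul, mul_smul, mulVec_smul]

theorem mapsTo_siegelFlow (hlam : 0 < lam) (he : ∀ j, ‖e j‖ = 1) {t : ℝ}
    (hQ : (Qt M t).PosSemidef) {xt : Fin r → ℂ} (hxt : Qt M t *ᵥ xt = at' lam A M a t)
    (hb : (bt lam b t).im ≥ (1 / (lam ^ t : ℝ)) * (herm (at' lam A M a t) xt).re) :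
    MapsTo (siegelFlow lam a b e A M t) (Siegel4 p q r) (Siegel4 p q r) := by
  intro x hx
  have hL : 0 < lam ^ t := Real.rpow_pos_of_pos hlam t
  have hsqrt : ‖((Real.sqrt (lam ^ t) : ℝ) : ℂ)‖ ^ 2 = lam ^ t := by
    rw [Complex.norm_real, Real.norm_of_nonneg (Real.sqrt_nonneg _), Real.sq_sqrt hL.le]
  have hunit : ∀ j, ‖e j ^ (t : ℂ)‖ = 1 := fun j => by
    rw [Complex.norm_cpow_real, he j, Real.one_rpow]
  have hquad := hQ.quadratic_nonneg hxt (lam ^ t)⁻¹ x.2.2.2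
  rw [Qt, re_herm_one_sub_conjTranspose_mul_mulVec] at hquad
  have hscaled : 0 ≤ lam ^ t * (enormSq x.2.2.2 - enormSq (At M t *ᵥ x.2.2.2))
      + 2 * (herm x.2.2.2 (at' lam A M a t)).re
      + 1 / lam ^ t * (herm (at' lam A M a t) xt).re := by
    refine (mul_nonneg hL.le hquad).trans_eq ?_
    linear_combination (2 * (herm x.2.2.2 (at' lam A M a t)).re
      + (lam ^ t)⁻¹ * (herm (at' lam A M a t) xt).re) * mul_inv_cancel₀ hL.ne'
  have hx' : lam ^ t * (enormSq x.2.1 + enormSq x.2.2.1 + enormSq x.2.2.2) < lam ^ t * x.1.im :=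
    mul_lt_mul_of_pos_left hx hL
  simp only [Siegel4, mem_ofPred_eq, siegelFlow, enormSq_smul, hsqrt,
    enormSq_diagonal_mulVec hunit, add_im, mul_im, ofReal_re, ofReal_im, mul_re, re_ofNat, I_re,
    im_ofNat, I_im]
  nlinarith

theorem differentiable_siegelFlow (t : ℝ) :
    Differentiable ℂ (siegelFlow (p := p) lam a b e A M t) := by
  unfold siegelFlow herm
  fun_prop

theorem continuous_uncurry_siegelFlow (hlam : 0 < lam) (he : ∀ j, e j ≠ 0) :
    Continuous (Function.uncurry (siegelFlow (p := p) lam a b e A M)) := by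
  have := continuous_at' (A := A) (M := M) a hlam
  have := continuous_bt b hlam
  have := continuous_At M
  have hsqrt : Continuous fun t : ℝ => ((Real.sqrt (lam ^ t) : ℝ) : ℂ) := by
    fun_prop (disch := exact hlam.ne')
  have hdiag : Continuous fun t : ℝ => diagonal fun j => e j ^ (t : ℂ) :=
    .matrix_diagonal (continuous_pi fun j => Complex.continuous_ofReal.const_cpow (.inl (he j)))
  change Continuous fun x : ℝ × E4 p q r => siegelFlow lam a b e A M x.1 x.2
  unfold siegelFlow herm
  refine .prodMk ?_ (.prodMk ?_ (.prodMk ((hsqrt.comp continuous_fst).smul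
    ((hdiag.comp continuous_fst).matrix_mulVec (by fun_prop))) ?_)) <;>
  fun_prop (disch := exact hlam.ne')

end siegelFlow

theorem stmt13_general {p q r : ℕ} (lam : ℝ) (hlam : 1 < lam)
    (a : Fin r → ℂ) (b : ℂ)
    (e : Fin q → ℂ) (he : ∀ j, ‖e j‖ = 1)
    (A : Matrix (Fin r) (Fin r) ℂ) (hAnorm : OpNormLeOne A)
    (ψ : E4 p q r → E4 p q r)
    (hψ : ∀ x, ψ x = ((lam : ℂ) * x.1 + 2 * Complex.I * herm x.2.2.2 a + b,
      (Real.sqrt lam : ℂ) • x.2.1,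
      (Real.sqrt lam : ℂ) • (Matrix.diagonal e).mulVec x.2.2.1,
      (Real.sqrt lam : ℂ) • A.mulVec x.2.2.2))
    (M : Matrix (Fin r) (Fin r) ℂ) (hM : NormedSpace.exp M = A)
    (hcond : ∀ t : ℝ, 0 ≤ t →
      (Qt M t).PosSemidef ∧
      ∃ x : Fin r → ℂ, (Qt M t).mulVec x = at' lam A M a t ∧
        (bt lam b t).im ≥ (1 / (lam ^ t : ℝ)) * (herm (at' lam A M a t) x).re) :
    ∃ φt : ℝ → E4 p q r → E4 p q r,
      IsHolSemigroupOn (Siegel4 p q r) φt ∧ ∀ z ∈ Siegel4 p q r, φt 1 z = ψ z := by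
  have hlam0 : 0 < lam := zero_lt_one.trans hlam
  have hS : IsUnit (Rt lam M 1) := isUnit_Rt_one hlam (hM ▸ hAnorm)
  have he0 : ∀ j, e j ≠ 0 := fun j => norm_ne_zero_iff.mp (by simp [he j])
  have hmaps : ∀ t, 0 ≤ t →
      MapsTo (siegelFlow lam a b e A M t) (Siegel4 p q r) (Siegel4 p q r) := fun t ht => by
    obtain ⟨hQ, xt, hxt, hb⟩ := hcond t ht
    exact mapsTo_siegelFlow hlam0 he hQ hxt hb
  refine ⟨siegelFlow lam a b e A M, .of_continuous hmaps
    (fun t _ => (differentiable_siegelFlow t).differentiableOn) (fun z _ => siegelFlow_zero z)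
    (fun s _ t _ z _ => siegelFlow_add hlam0 hM hS he0 s t z)
    (continuous_uncurry_siegelFlow hlam0 he0), fun z _ => ?_⟩
  rw [siegelFlow_one hlam.ne' hM hS, hψ]

/-- Let `ψ(z,u,v,w) = (λz + 2i⟨w,a⟩ + b, √λ u, √λ Dv, √λ Aw)` be a hyperbolic
self-map of `ℍ^N` (`λ > 1`, `D` diagonal unimodular without the entry `1`, `A`
non-singular, `‖A‖ ≤ 1`), and suppose `exp M = A`. If for every `t ≥ 0` the
matrix `Q_t` is Hermitian positive semi-definite and there is `x_t` with
`Q_t x_t = a_t` and `Im b_t ≥ (1/λ^t) x_tᴴ a_t`, then `ψ` embeds into a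
semigroup of holomorphic self-maps of `ℍ^N`. -/
theorem stmt13 {p q r : ℕ} (lam : ℝ) (hlam : 1 < lam)
    (a : Fin r → ℂ) (b : ℂ)
    (e : Fin q → ℂ) (he : ∀ j, ‖e j‖ = 1) (he1 : ∀ j, e j ≠ 1)
    (A : Matrix (Fin r) (Fin r) ℂ) (hAunit : IsUnit A) (hAnorm : OpNormLeOne A)
    (ψ : E4 p q r → E4 p q r)
    (hψ : ∀ x, ψ x = ((lam : ℂ) * x.1 + 2 * Complex.I * herm x.2.2.2 a + b,
      (Real.sqrt lam : ℂ) • x.2.1,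
      (Real.sqrt lam : ℂ) • (Matrix.diagonal e).mulVec x.2.2.1,
      (Real.sqrt lam : ℂ) • A.mulVec x.2.2.2))
    (hself : MapsTo ψ (Siegel4 p q r) (Siegel4 p q r))
    (M : Matrix (Fin r) (Fin r) ℂ) (hM : NormedSpace.exp M = A)
    (hcond : ∀ t : ℝ, 0 ≤ t →
      (Qt M t).PosSemidef ∧
      ∃ x : Fin r → ℂ, (Qt M t).mulVec x = at' lam A M a t ∧
        (bt lam b t).im ≥ (1 / (lam ^ t : ℝ)) * (herm (at' lam A M a t) x).re) :
    ∃ φt : ℝ → E4 p q r → E4 p q r,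
      IsHolSemigroupOn (Siegel4 p q r) φt ∧ ∀ z ∈ Siegel4 p q r, φt 1 z = ψ z :=
  stmt13_general lam hlam a b e he A hAnorm ψ hψ M hM hcond
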